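/- Let d ≥ 1, let a : Fin d → ℚ be a nonincreasing nonnegative sequence, and let L be a composition of d. Then the sequence v(L,a) is nonincreasing and nonnegative, it has the same weight as a (|v(L,a)| = |a|), and it is dominated by a: v(L,a) 0 + … + v(L,a) n ≤ a 0 + … + a n for every n < d. -/

import Mathlib

/-!
Averaging a nonincreasing sequence over a block moves mass from the front of the block to its
back: for an initial segment `s` of a block `B`, `#s • ∑_B a ≤ #B • ∑_s a`. Summing this over
the blocks that meet `Iic n` gives domination, and `s = B` gives equality of weights. Since every
entry of an earlier block dominates every entry of a later one, so do the block averages.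
-/

open Finset

/-- `vSeq L a` is the sequence `v(L,a)` of length `d`: it is constant on each block of the
composition `L` of `d`, and its value on block `i` is the average of `a` over that block,
i.e. (sum of `a` over block `i`) divided by the length `lᵢ` of block `i`. -/
noncomputable def vSeq {d : ℕ} (L : Composition d) (a : Fin d → ℚ) : Fin d → ℚ :=
  fun i => (∑ j : Fin d, if L.index j = L.index i then a j else 0) / (L.blocksFun (L.index i) : ℚ)

namespace Finset

variable {ι M : Type*} [AddCommMonoid M] [PartialOrder M] [IsOrderedAddMonoid M] {f : ι → M}

theorem card_nsmul_sum_le_card_nsmul_sum {s t : Finset ι}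
    (h : ∀ p ∈ s, ∀ q ∈ t, f q ≤ f p) : #s • ∑ q ∈ t, f q ≤ #t • ∑ p ∈ s, f p := by
  rw [← sum_const, smul_sum]
  exact sum_le_sum fun p hp => sum_le_card_nsmul t f (f p) (h p hp)

theorem card_nsmul_sum_le_card_nsmul_sum_of_subset [DecidableEq ι] {s t : Finset ι} (hst : s ⊆ t)
    (h : ∀ p ∈ s, ∀ q ∈ t \ s, f q ≤ f p) : #s • ∑ q ∈ t, f q ≤ #t • ∑ p ∈ s, f p := by
  rw [← sum_sdiff hst, ← card_sdiff_add_card_eq_card hst, smul_add, add_smul]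
  exact add_le_add_left (card_nsmul_sum_le_card_nsmul_sum h) _

end Finset

namespace Composition

variable {n : ℕ} (c : Composition n)

theorem monotone_index : Monotone c.index := fun p q hpq => by
  by_contra! h
  have := (c.lt_sizeUpTo_index_succ q).trans_le
    ((c.monotone_sizeUpTo (Nat.succ_le_of_lt h)).trans (c.sizeUpTo_index_le p))
  exact absurd hpq (not_le.2 (Fin.lt_def.2 this))

def block (i : Fin c.length) : Finset (Fin n) := {j | c.index j = i}

@[simp]
theorem mem_block {i : Fin c.length} {j : Fin n} : j ∈ c.block i ↔ c.index j = i := by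
  simp [block]

theorem block_eq_map (i : Fin c.length) :
    c.block i = univ.map (c.embedding i).toEmbedding := by
  ext j
  simp [← Composition.mem_range_embedding_iff', eq_comm]

@[simp]
theorem card_block (i : Fin c.length) : #(c.block i) = c.blocksFun i := by
  simp [block_eq_map]

end Composition

section vSeq

variable {d : ℕ} (L : Composition d) (a : Fin d → ℚ)

theorem vSeq_apply (i : Fin d) :
    vSeq L a i = (∑ j ∈ L.block (L.index i), a j) / L.blocksFun (L.index i) := by
  rw [vSeq, Composition.block, sum_filter]

theorem vSeq_eq_of_mem_block {k : Fin L.length} {i : Fin d} (hi : i ∈ L.block k) :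
    vSeq L a i = (∑ j ∈ L.block k, a j) / L.blocksFun k := by
  rw [vSeq_apply, L.mem_block.1 hi]

theorem vSeq_nonneg (ha : ∀ i, 0 ≤ a i) (i : Fin d) : 0 ≤ vSeq L a i := by
  rw [vSeq_apply]
  exact div_nonneg (sum_nonneg fun j _ => ha j) (Nat.cast_nonneg _)

theorem sum_vSeq_le_of_subset_block {k : Fin L.length} {s : Finset (Fin d)} (hs : s ⊆ L.block k)
    (h : ∀ p ∈ s, ∀ q ∈ L.block k \ s, a q ≤ a p) : ∑ i ∈ s, vSeq L a i ≤ ∑ i ∈ s, a i := by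
  have hpos : (0 : ℚ) < L.blocksFun k := mod_cast L.one_le_blocksFun k
  have key := card_nsmul_sum_le_card_nsmul_sum_of_subset hs h
  rw [L.card_block, nsmul_eq_mul, nsmul_eq_mul] at key
  rw [sum_congr rfl fun i hi => vSeq_eq_of_mem_block L a (hs hi), sum_const, nsmul_eq_mul,
    mul_div_assoc', div_le_iff₀ hpos, mul_comm _ (L.blocksFun k : ℚ)]
  exact key

theorem sum_block_vSeq (k : Fin L.length) :
    ∑ i ∈ L.block k, vSeq L a i = ∑ i ∈ L.block k, a i := by
  have hpos : (0 : ℚ) < L.blocksFun k := mod_cast L.one_le_blocksFun k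
  rw [sum_congr rfl fun i hi => vSeq_eq_of_mem_block L a hi, sum_const, L.card_block,
    nsmul_eq_mul, mul_div_cancel₀ _ hpos.ne']

theorem sum_vSeq : ∑ i, vSeq L a i = ∑ i, a i := by
  rw [← sum_fiberwise univ L.index, ← sum_fiberwise univ L.index a]
  exact sum_congr rfl fun k _ => sum_block_vSeq L a k

variable {a}

theorem antitone_vSeq (ha : Antitone a) : Antitone (vSeq L a) := by
  intro i j hij
  rcases (L.monotone_index hij).eq_or_lt with heq | hlt
  · rw [vSeq_apply, vSeq_apply, heq]
  have hblocks : ∀ p ∈ L.block (L.index i), ∀ q ∈ L.block (L.index j), a q ≤ a p :=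
    fun p hp q hq => ha <| le_of_lt <|
      L.monotone_index.reflect_lt (by rwa [L.mem_block.1 hp, L.mem_block.1 hq])
  have key := card_nsmul_sum_le_card_nsmul_sum hblocks
  rw [L.card_block, L.card_block, nsmul_eq_mul, nsmul_eq_mul] at key
  rw [vSeq_apply, vSeq_apply, div_le_div_iff₀ (mod_cast L.one_le_blocksFun _)
    (mod_cast L.one_le_blocksFun _)]
  linarith

/-- Each block meets `Iic n` in an initial segment of it, on which averaging can only lose mass. -/
theorem sum_Iic_vSeq_le (ha : Antitone a) (n : Fin d) :
    ∑ i ∈ Iic n, vSeq L a i ≤ ∑ i ∈ Iic n, a i := by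
  rw [← sum_fiberwise (Iic n) L.index, ← sum_fiberwise (Iic n) L.index a]
  refine sum_le_sum fun k _ => sum_vSeq_le_of_subset_block L a
    (fun i hi => L.mem_block.2 (mem_filter.1 hi).2) fun p hp q hq => ha ?_
  simp only [mem_sdiff, mem_filter, mem_Iic, Composition.mem_block] at hp hq
  exact (hp.1.trans_lt (not_le.1 fun h => hq.2 ⟨h, hq.1⟩)).le

end vSeq

theorem vSeq_antitone_nonneg_weight_dominated_general (d : ℕ) (a : Fin d → ℚ)
    (ha_mono : Antitone a) (ha_nonneg : ∀ i, 0 ≤ a i) (L : Composition d) :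
    Antitone (vSeq L a) ∧ (∀ i, 0 ≤ vSeq L a i) ∧
      (∑ i, vSeq L a i) = (∑ i, a i) ∧
      ∀ n : Fin d, (∑ i ∈ Finset.Iic n, vSeq L a i) ≤ (∑ i ∈ Finset.Iic n, a i) :=
  ⟨antitone_vSeq L ha_mono, vSeq_nonneg L a ha_nonneg, sum_vSeq L a, sum_Iic_vSeq_le L ha_mono⟩

/-- For a nonincreasing nonnegative sequence `a` of length `d ≥ 1` and a composition `L`
of `d`, the sequence `v(L,a)` is nonincreasing and nonnegative, has the same weight as `a`,
and is dominated by `a`. -/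
theorem vSeq_antitone_nonneg_weight_dominated (d : ℕ) (hd : 1 ≤ d) (a : Fin d → ℚ)
    (ha_mono : Antitone a) (ha_nonneg : ∀ i, 0 ≤ a i) (L : Composition d) :
    Antitone (vSeq L a) ∧ (∀ i, 0 ≤ vSeq L a i) ∧
      (∑ i, vSeq L a i) = (∑ i, a i) ∧
      ∀ n : Fin d, (∑ i ∈ Finset.Iic n, vSeq L a i) ≤ (∑ i ∈ Finset.Iic n, a i) :=
  vSeq_antitone_nonneg_weight_dominated_general d a ha_mono ha_nonneg L
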